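/- Suppose S(z) = D + C (I - Z(z)A)^{-1} Z(z) B where the colligation U = [[A, B],[C, D]] : X ⊕ U → X^d ⊕ Y is isometric (U*U = I). Then for all z, ζ in the open unit ball B^d of ℂ^d: I_U - S(z)* S(ζ) = B* (I - Z(z)* A*)^{-1} (I - Z(z)* Z(ζ)) (I - A Z(ζ))^{-1} B. -/

import Mathlib

/-! Put `x_w = Z(w) (1 - A Z(w))⁻¹ B`. The push-through identity
`(1 - Z A)⁻¹ Z = Z (1 - A Z)⁻¹` gives `S(w) = C x_w + D`, and `A x_w + B = (1 - A Z(w))⁻¹ B`,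
so the colligation `U` maps the column `[x_w; 1]` to `[(1 - A Z(w))⁻¹ B; S(w)]`. Since `U` is
isometric, the Gram operators of these columns agree:
`x_z* x_ζ + 1 = B* (1 - A Z(z))⁻* (1 - A Z(ζ))⁻¹ B + S(z)* S(ζ)`, which rearranges to the
identity. Invertibility on the ball comes from `‖A‖ ≤ 1` and `‖Z(w)‖ ≤ ‖w‖`. -/
open scoped ENNReal
set_option synthInstance.maxHeartbeats 400000
set_option maxHeartbeats 1000000

instance PiLp.instCompleteSpace' {p : ℝ≥0∞} {ι : Type*} {β : ι → Type*}
    [∀ i, UniformSpace (β i)] [∀ i, CompleteSpace (β i)] : CompleteSpace (PiLp p β) :=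
  (PiLp.uniformEquiv p β).completeSpace_iff.2 (Pi.complete β)

/-- The row operator `Z(z) = [z₁ I_X, …, z_d I_X] : X^d → X`. -/
noncomputable def rowOp {X : Type*} [NormedAddCommGroup X] [NormedSpace ℂ X]
    {d : ℕ} (z : EuclideanSpace ℂ (Fin d)) : PiLp 2 (fun _ : Fin d => X) →L[ℂ] X :=
  ∑ j : Fin d, z j • ((ContinuousLinearMap.proj j : (∀ _ : Fin d, X) →L[ℂ] X).comp
      (PiLp.continuousLinearEquiv 2 ℂ (fun _ : Fin d => X)).toContinuousLinearMap)

open scoped InnerProduct Ring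
open ContinuousLinearMap

theorem mul_ringInverse_one_sub_add_one {R : Type*} [Ring R] {a : R} (h : IsUnit (1 - a)) :
    a * (1 - a)⁻¹ʳ + 1 = (1 - a)⁻¹ʳ := by
  have h' := Ring.mul_inverse_cancel _ h
  rw [sub_mul, one_mul] at h'
  exact (sub_eq_iff_eq_add'.mp h').symm

theorem ringInverse_one_sub_mul_add_one {R : Type*} [Ring R] {a : R} (h : IsUnit (1 - a)) :
    (1 - a)⁻¹ʳ * a + 1 = (1 - a)⁻¹ʳ := by
  have h' := Ring.inverse_mul_cancel _ h
  rw [mul_sub, mul_one] at h'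
  exact (sub_eq_iff_eq_add'.mp h').symm

section PushThrough

variable {𝕜 E F G Y : Type*} [NontriviallyNormedField 𝕜]
  [NormedAddCommGroup E] [NormedSpace 𝕜 E] [NormedAddCommGroup F] [NormedSpace 𝕜 F]
  [NormedAddCommGroup G] [NormedSpace 𝕜 G] [NormedAddCommGroup Y] [NormedSpace 𝕜 Y]

theorem one_sub_comp_comp_eq_comp_one_sub_comp (A : E →L[𝕜] F) (Z : F →L[𝕜] E) :
    (1 - Z ∘L A) ∘L Z = Z ∘L (1 - A ∘L Z) := by
  simp only [sub_comp, comp_sub, one_def, id_comp, comp_id, comp_assoc]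

/-- Jacobson's lemma. -/
theorem ringInverse_one_sub_comp_eq {A : E →L[𝕜] F} {Z : F →L[𝕜] E}
    (h : IsUnit (1 - A ∘L Z)) :
    (1 - Z ∘L A)⁻¹ʳ = 1 + Z ∘L (1 - A ∘L Z)⁻¹ʳ ∘L A := by
  set q := (1 - A ∘L Z)⁻¹ʳ
  have hright : (1 - Z ∘L A) ∘L (Z ∘L q ∘L A) = Z ∘L A := by
    rw [← comp_assoc, one_sub_comp_comp_eq_comp_one_sub_comp, comp_assoc, ← comp_assoc _ q,
      ← mul_def, Ring.mul_inverse_cancel _ h, one_def, id_comp]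
  have hleft : (Z ∘L q ∘L A) ∘L (1 - Z ∘L A) = Z ∘L A := by
    rw [comp_assoc, comp_assoc, ← one_sub_comp_comp_eq_comp_one_sub_comp Z A, ← comp_assoc q,
      ← mul_def, Ring.inverse_mul_cancel _ h, one_def, id_comp]
  refine Ring.inverse_unit ⟨1 - Z ∘L A, 1 + Z ∘L q ∘L A, ?_, ?_⟩
  · rw [mul_def, comp_add, hright, one_def, comp_id, sub_add_cancel]
  · rw [mul_def, add_comp, hleft, one_def, id_comp, sub_add_cancel]

theorem comp_ringInverse_one_sub_comp {A : E →L[𝕜] F} {Z : F →L[𝕜] E}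
    (h : IsUnit (1 - A ∘L Z)) :
    Z ∘L (1 - A ∘L Z)⁻¹ʳ = (1 - Z ∘L A)⁻¹ʳ ∘L Z := by
  conv_lhs => rw [← ringInverse_one_sub_mul_add_one h]
  rw [ringInverse_one_sub_comp_eq h, comp_add, add_comp, add_comm]
  congr 1

noncomputable def transferFunction (A : E →L[𝕜] F) (B : G →L[𝕜] F) (C : E →L[𝕜] Y)
    (D : G →L[𝕜] Y) (Z : F →L[𝕜] E) : G →L[𝕜] Y :=
  D + C ∘L (1 - Z ∘L A)⁻¹ʳ ∘L Z ∘L B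

theorem transferFunction_eq {A : E →L[𝕜] F} {Z : F →L[𝕜] E} (B : G →L[𝕜] F) (C : E →L[𝕜] Y)
    (D : G →L[𝕜] Y) (h : IsUnit (1 - A ∘L Z)) :
    transferFunction A B C D Z = C ∘L (Z ∘L (1 - A ∘L Z)⁻¹ʳ ∘L B) + D := by
  rw [transferFunction, add_comm, ← comp_assoc Z, comp_ringInverse_one_sub_comp h, comp_assoc]

theorem comp_comp_ringInverse_one_sub_comp_add {A : E →L[𝕜] F} {Z : F →L[𝕜] E}
    (B : G →L[𝕜] F) (h : IsUnit (1 - A ∘L Z)) :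
    A ∘L (Z ∘L (1 - A ∘L Z)⁻¹ʳ ∘L B) + B = (1 - A ∘L Z)⁻¹ʳ ∘L B := by
  conv_rhs => rw [← mul_ringInverse_one_sub_add_one h]
  rw [add_comp, one_def, id_comp]
  rfl

end PushThrough

section Adjoint

variable {𝕜 E F G Y : Type*} [RCLike 𝕜]
  [NormedAddCommGroup E] [InnerProductSpace 𝕜 E] [CompleteSpace E]
  [NormedAddCommGroup F] [InnerProductSpace 𝕜 F] [CompleteSpace F]
  [NormedAddCommGroup G] [InnerProductSpace 𝕜 G] [CompleteSpace G]
  [NormedAddCommGroup Y] [InnerProductSpace 𝕜 Y] [CompleteSpace Y]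

theorem adjoint_ringInverse (a : E →L[𝕜] E) : (a⁻¹ʳ)† = (a†)⁻¹ʳ := by
  rw [← star_eq_adjoint, ← star_eq_adjoint, Ring.inverse_star]

theorem adjoint_one_sub_comp (A : E →L[𝕜] F) (Z : F →L[𝕜] E) :
    (1 - A ∘L Z)† = 1 - Z† ∘L A† := by
  rw [map_sub, adjoint_comp, adjoint_one]

theorem norm_le_one_of_adjoint_comp_add_adjoint_comp_eq_one {A : E →L[𝕜] F} {C : E →L[𝕜] Y}
    (h : A† ∘L A + C† ∘L C = 1) : ‖A‖ ≤ 1 := by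
  refine opNorm_le_bound _ zero_le_one fun x => ?_
  have hsq : ‖A x‖ ^ 2 + ‖C x‖ ^ 2 = ‖x‖ ^ 2 := by
    rw [apply_norm_sq_eq_inner_adjoint_left, apply_norm_sq_eq_inner_adjoint_left, ← map_add,
      ← inner_add_left, ← add_apply, h, one_apply_eq_self, inner_self_eq_norm_sq]
  nlinarith [norm_nonneg (A x), norm_nonneg x, sq_nonneg ‖C x‖]

/-- `U*U = 1` for `U = [[A, B], [C, D]]`, evaluated between the columns `[x; 1]` and `[x'; 1]`. -/
theorem isometric_colligation_gram_eq {A : E →L[𝕜] F} {B : G →L[𝕜] F} {C : E →L[𝕜] Y} {D : G →L[𝕜] Y}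
    (h₁ : A† ∘L A + C† ∘L C = 1) (h₂ : A† ∘L B + C† ∘L D = 0)
    (h₃ : B† ∘L A + D† ∘L C = 0) (h₄ : B† ∘L B + D† ∘L D = 1) (x x' : G →L[𝕜] E) :
    (A ∘L x + B)† ∘L (A ∘L x' + B) + (C ∘L x + D)† ∘L (C ∘L x' + D) = x† ∘L x' + 1 := by
  calc _ = x† ∘L (A† ∘L A + C† ∘L C) ∘L x' + x† ∘L (A† ∘L B + C† ∘L D)
        + (B† ∘L A + D† ∘L C) ∘L x' + (B† ∘L B + D† ∘L D) := by
        simp only [map_add, adjoint_comp, add_comp, comp_add, comp_assoc]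
        abel
    _ = x† ∘L x' + 1 := by
        rw [h₁, h₂, h₃, h₄, one_def, id_comp, comp_zero, zero_comp, add_zero, add_zero]

theorem one_sub_adjoint_transferFunction_comp_transferFunction {A : E →L[𝕜] F} {B : G →L[𝕜] F}
    {C : E →L[𝕜] Y} {D : G →L[𝕜] Y}
    (h₁ : A† ∘L A + C† ∘L C = 1) (h₂ : A† ∘L B + C† ∘L D = 0)
    (h₃ : B† ∘L A + D† ∘L C = 0) (h₄ : B† ∘L B + D† ∘L D = 1) {Z Z' : F →L[𝕜] E}
    (hZ : IsUnit (1 - A ∘L Z)) (hZ' : IsUnit (1 - A ∘L Z')) :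
    1 - (transferFunction A B C D Z)† ∘L transferFunction A B C D Z'
      = B† ∘L (1 - Z† ∘L A†)⁻¹ʳ ∘L (1 - Z† ∘L Z') ∘L (1 - A ∘L Z')⁻¹ʳ ∘L B := by
  have key := isometric_colligation_gram_eq h₁ h₂ h₃ h₄ (Z ∘L (1 - A ∘L Z)⁻¹ʳ ∘L B)
    (Z' ∘L (1 - A ∘L Z')⁻¹ʳ ∘L B)
  rw [comp_comp_ringInverse_one_sub_comp_add B hZ, comp_comp_ringInverse_one_sub_comp_add B hZ',
    ← transferFunction_eq B C D hZ, ← transferFunction_eq B C D hZ'] at key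
  rw [← adjoint_one_sub_comp, ← adjoint_ringInverse]
  set q := (1 - A ∘L Z)⁻¹ʳ
  set q' := (1 - A ∘L Z')⁻¹ʳ
  calc _ = (q ∘L B)† ∘L (q' ∘L B) - (Z ∘L q ∘L B)† ∘L (Z' ∘L q' ∘L B) := by
        rw [sub_eq_sub_iff_add_eq_add, key, add_comm]
    _ = _ := by
        simp only [adjoint_comp, sub_comp, comp_sub, one_def, id_comp, comp_assoc]

end Adjoint

theorem rowOp_apply {X : Type*} [NormedAddCommGroup X] [NormedSpace ℂ X] {d : ℕ}
    (z : EuclideanSpace ℂ (Fin d)) (x : PiLp 2 (fun _ : Fin d => X)) :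
    rowOp z x = ∑ j, z j • x j := by
  simp [rowOp]

theorem norm_rowOp_le {X : Type*} [NormedAddCommGroup X] [NormedSpace ℂ X] {d : ℕ}
    (z : EuclideanSpace ℂ (Fin d)) : ‖(rowOp z : PiLp 2 (fun _ : Fin d => X) →L[ℂ] X)‖ ≤ ‖z‖ := by
  refine opNorm_le_bound _ (norm_nonneg z) fun x => ?_
  calc ‖rowOp z x‖ ≤ ∑ j, ‖z j‖ * ‖x j‖ := by
        rw [rowOp_apply]
        exact (norm_sum_le _ _).trans_eq (by simp only [norm_smul])
    _ ≤ ‖z‖ * ‖x‖ := by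
        rw [EuclideanSpace.norm_eq, PiLp.norm_eq_of_L2, ← Real.sqrt_mul (by positivity)]
        exact Real.le_sqrt_of_sq_le (Finset.sum_mul_sq_le_sq_mul_sq _ _ _)

theorem isUnit_one_sub_comp_rowOp {X : Type*} [NormedAddCommGroup X] [NormedSpace ℂ X]
    [CompleteSpace X] {d : ℕ} {A : X →L[ℂ] PiLp 2 (fun _ : Fin d => X)} (hA : ‖A‖ ≤ 1)
    {z : EuclideanSpace ℂ (Fin d)} (hz : ‖z‖ < 1) : IsUnit (1 - A ∘L rowOp z) :=
  isUnit_one_sub_of_norm_lt_one <| (opNorm_comp_le _ _).trans_lt <|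
    (mul_le_mul hA (norm_rowOp_le z) (norm_nonneg _) zero_le_one).trans_lt (by rwa [one_mul])

theorem isometric_realization_kernel_identity_general
    {X G Y : Type*}
    [NormedAddCommGroup X] [InnerProductSpace ℂ X] [CompleteSpace X]
    [NormedAddCommGroup G] [InnerProductSpace ℂ G] [CompleteSpace G]
    [NormedAddCommGroup Y] [InnerProductSpace ℂ Y] [CompleteSpace Y]
    {d : ℕ}
    (A : X →L[ℂ] PiLp 2 (fun _ : Fin d => X))
    (B : G →L[ℂ] PiLp 2 (fun _ : Fin d => X))
    (C : X →L[ℂ] Y) (D : G →L[ℂ] Y)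
    (hiso1 : (ContinuousLinearMap.adjoint A).comp A
        + (ContinuousLinearMap.adjoint C).comp C = 1)
    (hiso2 : (ContinuousLinearMap.adjoint A).comp B
        + (ContinuousLinearMap.adjoint C).comp D = 0)
    (hiso3 : (ContinuousLinearMap.adjoint B).comp A
        + (ContinuousLinearMap.adjoint D).comp C = 0)
    (hiso4 : (ContinuousLinearMap.adjoint B).comp B
        + (ContinuousLinearMap.adjoint D).comp D = 1)
    (S : EuclideanSpace ℂ (Fin d) → G →L[ℂ] Y)
    (hS : ∀ z : EuclideanSpace ℂ (Fin d),
      S z = D + ((C.comp (Ring.inverse (1 - (rowOp z).comp A))).comp (rowOp z)).comp B) :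
    ∀ z ζ : EuclideanSpace ℂ (Fin d), ‖z‖ < 1 → ‖ζ‖ < 1 →
      (1 : G →L[ℂ] G) - (ContinuousLinearMap.adjoint (S z)).comp (S ζ)
      = (((ContinuousLinearMap.adjoint B).comp
            (Ring.inverse ((1 : PiLp 2 (fun _ : Fin d => X) →L[ℂ] PiLp 2 (fun _ : Fin d => X))
              - (ContinuousLinearMap.adjoint (rowOp z)).comp
                  (ContinuousLinearMap.adjoint A)))).comp
          ((1 : PiLp 2 (fun _ : Fin d => X) →L[ℂ] PiLp 2 (fun _ : Fin d => X))
            - (ContinuousLinearMap.adjoint (rowOp z)).comp (rowOp ζ))).comp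
        ((Ring.inverse (1 - A.comp (rowOp ζ))).comp B) := by
  intro z ζ hz hζ
  have hA := norm_le_one_of_adjoint_comp_add_adjoint_comp_eq_one hiso1
  rw [hS, hS]
  exact one_sub_adjoint_transferFunction_comp_transferFunction hiso1 hiso2 hiso3 hiso4
    (isUnit_one_sub_comp_rowOp hA hz) (isUnit_one_sub_comp_rowOp hA hζ)

/-- for an isometric colligation `U = [[A,B],[C,D]]` (i.e. `U*U = I`,
expressed componentwise) and `S(z) = D + C(I - Z(z)A)⁻¹Z(z)B`, one has
`I - S(z)*S(ζ) = B*(I - Z(z)*A*)⁻¹(I - Z(z)*Z(ζ))(I - AZ(ζ))⁻¹B` on the ball. -/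
theorem isometric_realization_kernel_identity
    {X G Y : Type*}
    [NormedAddCommGroup X] [InnerProductSpace ℂ X] [CompleteSpace X]
    [NormedAddCommGroup G] [InnerProductSpace ℂ G] [CompleteSpace G]
    [NormedAddCommGroup Y] [InnerProductSpace ℂ Y] [CompleteSpace Y]
    {d : ℕ} (hd : 1 ≤ d)
    (A : X →L[ℂ] PiLp 2 (fun _ : Fin d => X))
    (B : G →L[ℂ] PiLp 2 (fun _ : Fin d => X))
    (C : X →L[ℂ] Y) (D : G →L[ℂ] Y)
    (hiso1 : (ContinuousLinearMap.adjoint A).comp A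
        + (ContinuousLinearMap.adjoint C).comp C = 1)
    (hiso2 : (ContinuousLinearMap.adjoint A).comp B
        + (ContinuousLinearMap.adjoint C).comp D = 0)
    (hiso3 : (ContinuousLinearMap.adjoint B).comp A
        + (ContinuousLinearMap.adjoint D).comp C = 0)
    (hiso4 : (ContinuousLinearMap.adjoint B).comp B
        + (ContinuousLinearMap.adjoint D).comp D = 1)
    (S : EuclideanSpace ℂ (Fin d) → G →L[ℂ] Y)
    (hS : ∀ z : EuclideanSpace ℂ (Fin d),
      S z = D + ((C.comp (Ring.inverse (1 - (rowOp z).comp A))).comp (rowOp z)).comp B) :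
    ∀ z ζ : EuclideanSpace ℂ (Fin d), ‖z‖ < 1 → ‖ζ‖ < 1 →
      (1 : G →L[ℂ] G) - (ContinuousLinearMap.adjoint (S z)).comp (S ζ)
      = (((ContinuousLinearMap.adjoint B).comp
            (Ring.inverse ((1 : PiLp 2 (fun _ : Fin d => X) →L[ℂ] PiLp 2 (fun _ : Fin d => X))
              - (ContinuousLinearMap.adjoint (rowOp z)).comp
                  (ContinuousLinearMap.adjoint A)))).comp
          ((1 : PiLp 2 (fun _ : Fin d => X) →L[ℂ] PiLp 2 (fun _ : Fin d => X))
            - (ContinuousLinearMap.adjoint (rowOp z)).comp (rowOp ζ))).comp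
        ((Ring.inverse (1 - A.comp (rowOp ζ))).comp B) :=
  isometric_realization_kernel_identity_general A B C D hiso1 hiso2 hiso3 hiso4 S hS
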